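/- Let ξ_r be an r-region plan of G with r > 1 and W(ξ_r) > 0, let Z > 0, and define f(ξ_r) = Σ_{ξ_{r-1} ∈ A₁(ξ_r)} (γ(ξ_{r-1})/Z) · M(ξ_r | ξ_{r-1}). Assume S := Σ_{{G_k, G_{k'}} ∈ AR(ξ_r)} φ(G[V_k ∪ V_{k'}] | ξ̃_{r-1}) · (W(ξ̃_{r-1})/W(ξ_r)) · (τ(G[V_k ∪ V_{k'}]) / (τ(G_k) · τ(G_{k'})))^{ρ−1} · |C(G_k, G_{k'})| is nonzero, where for each adjacent pair the plan ξ̃_{r-1} is obtained from ξ_r by replacing the blocks V_k and V_{k'} with V_k ∪ V_{k'}. Then γ(ξ_r)/(Z · f(ξ_r)) = K · S^{-1}. -/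

import Mathlib

open SimpleGraph

namespace Redist

variable {V : Type*} [Fintype V] [DecidableEq V]

/-- The subgraph of `G` induced by the vertex set `s` (the graph `G[s]`). -/
abbrev ind (G : SimpleGraph V) (s : Set V) : G.Subgraph :=
  (⊤ : G.Subgraph).induce s

/-- `T` is a spanning tree of the subgraph `H` of `G`. -/
def IsSpanningTreeOf (G : SimpleGraph V) (T H : G.Subgraph) : Prop :=
  T ≤ H ∧ T.verts = H.verts ∧ T.coe.IsTree

/-- `τ H`: the number of spanning trees of the subgraph `H`. -/
noncomputable def tau (G : SimpleGraph V) (H : G.Subgraph) : ℕ :=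
  {T : G.Subgraph | IsSpanningTreeOf G T H}.ncard

/-- `C(s, t)`: the set of edges of `G` with one endpoint in `s` and the other in `t`. -/
def crossEdges (G : SimpleGraph V) (s t : Set V) : Set (Sym2 V) :=
  {e | e ∈ G.edgeSet ∧ ∃ u v : V, e = s(u, v) ∧ u ∈ s ∧ v ∈ t}

/-- The subgraph obtained from `H` by adding the edges in `E'` (that are edges of `G`). -/
def withEdges (G : SimpleGraph V) (H : G.Subgraph) (E' : Set (Sym2 V)) : G.Subgraph where
  verts := H.verts ∪ {v | ∃ e ∈ E' ∩ G.edgeSet, v ∈ e}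
  Adj u v := H.Adj u v ∨ (s(u, v) ∈ E' ∧ G.Adj u v)
  adj_sub := by
    rintro u v (h | ⟨-, h⟩)
    · exact H.adj_sub h
    · exact h
  edge_vert := by
    rintro u v (h | ⟨h, hG⟩)
    · exact Or.inl (H.edge_vert h)
    · exact Or.inr ⟨s(u, v), ⟨h, hG⟩, Sym2.mem_mk_left u v⟩
  symm := by
    constructor
    rintro u v (h | ⟨h, hG⟩)
    · exact Or.inl (H.adj_symm h)
    · exact Or.inr ⟨by rwa [Sym2.eq_swap], hG.symm⟩

/-- A plan with `r` regions: a partition of the vertex set into `r` nonempty blocks,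
each inducing a connected subgraph. -/
structure Plan (G : SimpleGraph V) (r : ℕ) where
  blocks : Set (Set V)
  ncard_blocks : blocks.ncard = r
  blocks_nonempty : ∀ B ∈ blocks, B.Nonempty
  blocks_disjoint : ∀ B ∈ blocks, ∀ B' ∈ blocks, B ≠ B' → Disjoint B B'
  blocks_cover : ∀ v : V, ∃ B ∈ blocks, v ∈ B
  blocks_connected : ∀ B ∈ blocks, (ind G B).Connected

/-- `ξp` is a 1-region ancestor of `ξr`: exactly one region of `ξp` is not a region of `ξr`. -/
def IsAncestor (G : SimpleGraph V) {r : ℕ} (ξp : Plan G (r - 1)) (ξr : Plan G r) : Prop :=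
  (ξp.blocks \ ξr.blocks).ncard = 1

/-- An `r`-region forest plan: `r` vertex-disjoint trees covering all of `V`. -/
structure ForestPlan (G : SimpleGraph V) (r : ℕ) where
  trees : Set G.Subgraph
  ncard_trees : trees.ncard = r
  isTree : ∀ T ∈ trees, T.coe.IsTree
  trees_disjoint : ∀ T ∈ trees, ∀ T' ∈ trees, T ≠ T' → Disjoint T.verts T'.verts
  trees_cover : ∀ v : V, ∃ T ∈ trees, v ∈ T.verts

/-- The induced plan of a forest plan (as a family of blocks). -/
def forestBlocks (G : SimpleGraph V) {r : ℕ} (F : ForestPlan G r) : Set (Set V) :=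
  Subgraph.verts '' F.trees

/-- `Fp` is a 1-region tree ancestor of `Fr`. -/
def ForestAncestor (G : SimpleGraph V) {r : ℕ} (Fp : ForestPlan G (r - 1))
    (Fr : ForestPlan G r) : Prop :=
  (Fp.trees \ Fr.trees).ncard = 1

variable {A : Type*}

/-- The set of administrative units meeting the vertex set `s`. -/
def unitSet (η : V → A) (s : Set V) : Set A := {a | (s ∩ η ⁻¹' {a}).Nonempty}

/-- A block is hierarchically connected: its intersection with each administrative unit has
at most one connected component. -/
def HierConnectedBlock (G : SimpleGraph V) (η : V → A) (B : Set V) : Prop :=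
  ∀ a : A, (ind G (B ∩ η ⁻¹' {a})).coe.Preconnected

/-- `T` is an `η`-hierarchical tree on the region induced by `B`. -/
def IsHierTree (G : SimpleGraph V) (η : V → A) (T : G.Subgraph) (B : Set V) : Prop :=
  IsSpanningTreeOf G T (ind G B) ∧
    ∀ a : A, (B ∩ η ⁻¹' {a}).Nonempty →
      IsSpanningTreeOf G (T.induce (B ∩ η ⁻¹' {a})) (ind G (B ∩ η ⁻¹' {a}))

/-- Two blocks are administratively adjacent. -/
def AdminAdj (G : SimpleGraph V) (η : V → A) (B B' : Set V) : Prop :=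
  ∃ a : A, ∃ u v : V, G.Adj u v ∧ u ∈ B ∩ η ⁻¹' {a} ∧ v ∈ B' ∩ η ⁻¹' {a}

/-- `S` is (the set of regions of) a connected component of the administrative adjacency
graph of the plan with blocks `blocks`. -/
def IsAdminComponent (G : SimpleGraph V) (η : V → A) (blocks S : Set (Set V)) : Prop :=
  S ⊆ blocks ∧ S.Nonempty ∧
    (∀ B ∈ S, ∀ B' ∈ S,
      Relation.ReflTransGen (fun X Y => X ∈ S ∧ Y ∈ S ∧ AdminAdj G η X Y) B B') ∧
    ∀ B ∈ S, ∀ B' ∈ blocks, B' ∉ S → ¬AdminAdj G η B B'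

/-- The number of connected components of the subgraph induced by `s`. -/
noncomputable def numComponents (G : SimpleGraph V) (s : Set V) : ℕ :=
  Nat.card ((ind G s).coe.ConnectedComponent)

/-- The number of administrative splits of a family `S` of blocks. -/
noncomputable def splits [Fintype A] (G : SimpleGraph V) (η : V → A) (S : Set (Set V)) : ℕ :=
  (∑ᶠ a : A, ∑ᶠ B ∈ S, numComponents G (B ∩ η ⁻¹' {a})) -
    {a : A | ∃ B ∈ S, (B ∩ η ⁻¹' {a}).Nonempty}.ncard

/-- `T` is a hierarchical plan tree for the plan with blocks `blocks`. -/
def IsHierPlanTree (G : SimpleGraph V) (η : V → A) (T : G.Subgraph)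
    (blocks : Set (Set V)) : Prop :=
  IsHierTree G η T Set.univ ∧ ∀ B ∈ blocks, IsHierTree G η (T.induce B) B

/-- The plan with blocks `blocks` is hierarchical. -/
def IsHierPlanBlocks (G : SimpleGraph V) (η : V → A) (blocks : Set (Set V)) : Prop :=
  ∃ T : G.Subgraph, IsHierPlanTree G η T blocks

/-- The effective region tree boundary length between two vertex-disjoint trees. -/
noncomputable def EffB (G : SimpleGraph V) (p : G.Subgraph → Sym2 V → ℝ)
    (Tk Tk' : G.Subgraph) : ℝ :=
  ∑ᶠ e ∈ crossEdges G Tk.verts Tk'.verts, p (withEdges G (Tk ⊔ Tk') {e}) e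

/-!
Merging two adjacent regions of `ξ_r` gives a 1-region ancestor, and every 1-region ancestor
arises this way from exactly one pair: the ancestor `ξ_p` is recovered from the pair
`ξ_r.blocks \ ξ_p.blocks`, whose union is the old region. So `ξ_p ↦ ξ_r.blocks \ ξ_p.blocks`
is a bijection `A₁(ξ_r) ≃ AR(ξ_r)`. Along it, the spanning tree counts of the untouched regions
cancel in `γ(ξ_p) / γ(ξ_r)`, and each term `(γ(ξ_p) / Z) · M(ξ_r | ξ_p)` becomes
`γ(ξ_r) / (Z K)` times the summand of `S` for that pair. Hence `f(ξ_r) = γ(ξ_r) S / (Z K)`, and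
`γ(ξ_r) > 0` because every region, being connected, has a spanning tree.
-/

section SpanningTrees

variable {G : SimpleGraph V}

omit [Fintype V] [DecidableEq V] in
theorem exists_isSpanningTreeOf {H : G.Subgraph} (hH : H.Connected) :
    ∃ T, IsSpanningTreeOf G T H := by
  obtain ⟨T', hle, hT'⟩ := hH.coe.exists_isTree_le
  let T : G.Subgraph :=
    { verts := H.verts
      Adj u v := ∃ (hu : u ∈ H.verts) (hv : v ∈ H.verts), T'.Adj ⟨u, hu⟩ ⟨v, hv⟩
      adj_sub := fun ⟨_, _, h⟩ => H.adj_sub (hle h)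
      edge_vert := fun ⟨hu, _, _⟩ => hu
      symm := ⟨fun _ _ ⟨hu, hv, h⟩ => ⟨hv, hu, h.symm⟩⟩ }
  have hcoe : T.coe = T' := by
    ext u v
    exact ⟨fun ⟨_, _, h⟩ => h, fun h => ⟨u.2, v.2, h⟩⟩
  exact ⟨T, ⟨subset_rfl, fun _ _ ⟨_, _, h⟩ => hle h⟩, rfl, hcoe ▸ hT'⟩

omit [DecidableEq V] in
theorem tau_pos {H : G.Subgraph} (hH : H.Connected) : 0 < tau G H :=
  (Set.ncard_pos (Set.toFinite _)).mpr (exists_isSpanningTreeOf hH)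

end SpanningTrees

section CrossEdges

variable {G : SimpleGraph V}

omit [Fintype V] [DecidableEq V] in
theorem crossEdges_nonempty_of_connected {B B' : Set V} (hB : B.Nonempty) (hB' : B'.Nonempty)
    (hd : Disjoint B B') (hc : (ind G (B ∪ B')).Connected) :
    (crossEdges G B B').Nonempty := by
  obtain ⟨x, hx⟩ := hB
  obtain ⟨y, hy⟩ := hB'
  obtain ⟨p, hp⟩ := ((Subgraph.connected_iff_forall_exists_walk_subgraph _).mp hc).2
    (Or.inl hx) (Or.inr hy)
  obtain ⟨d, hd_mem, hd_fst, hd_snd⟩ :=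
    p.exists_boundary_dart B hx (Set.disjoint_right.mp hd hy)
  have hd_snd_mem : d.snd ∈ B ∪ B' :=
    hp.1 (by simpa using p.dart_snd_mem_support_of_mem_darts hd_mem)
  exact ⟨s(d.fst, d.snd), d.adj, d.fst, d.snd, rfl, hd_fst, hd_snd_mem.resolve_left hd_snd⟩

omit [Fintype V] [DecidableEq V] in
theorem connected_ind_union {B B' : Set V} (hB : (ind G B).Connected)
    (hB' : (ind G B').Connected) (hc : (crossEdges G B B').Nonempty) :
    (ind G (B ∪ B')).Connected := by
  obtain ⟨_, huv, u, v, rfl, hu, hv⟩ := hc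
  exact connected_induce_iff.mp <| connected_induce_union
    (connected_induce_iff.mpr hB).preconnected (connected_induce_iff.mpr hB').preconnected
    hu hv huv

end CrossEdges

namespace Plan

variable {G : SimpleGraph V} {r : ℕ}

omit [Fintype V] [DecidableEq V] in
theorem blocks_injective : Function.Injective (Plan.blocks : Plan G r → Set (Set V)) := by
  rintro ⟨⟩ ⟨⟩ h
  simp_all

omit [Fintype V] [DecidableEq V] in
theorem eq_of_mem_of_mem (ξ : Plan G r) {B B' : Set V} (hB : B ∈ ξ.blocks)
    (hB' : B' ∈ ξ.blocks) {x : V} (hxB : x ∈ B) (hxB' : x ∈ B') : B = B' := by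
  by_contra hne
  exact Set.disjoint_left.mp (ξ.blocks_disjoint B hB B' hB' hne) hxB hxB'

omit [Fintype V] [DecidableEq V] in
theorem union_notMem (ξ : Plan G r) {Bk Bk' : Set V} (hBk : Bk ∈ ξ.blocks)
    (hBk' : Bk' ∈ ξ.blocks) (hne : Bk ≠ Bk') : Bk ∪ Bk' ∉ ξ.blocks := by
  intro hmem
  obtain ⟨x, hx⟩ := ξ.blocks_nonempty Bk hBk
  obtain ⟨y, hy⟩ := ξ.blocks_nonempty Bk' hBk'
  exact hne <| (ξ.eq_of_mem_of_mem hBk hmem hx (Or.inl hx)).trans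
    (ξ.eq_of_mem_of_mem hBk' hmem hy (Or.inr hy)).symm

omit [DecidableEq V] in
theorem finprod_tau_rpow_pos (ξ : Plan G r) (ρ : ℝ) :
    0 < ∏ᶠ B ∈ ξ.blocks, (tau G (ind G B) : ℝ) ^ ρ :=
  finprod_mem_induction (0 < ·) one_pos (fun _ _ => mul_pos) fun B hB =>
    Real.rpow_pos_of_pos (Nat.cast_pos.mpr (tau_pos (ξ.blocks_connected B hB))) ρ

/-- The plan `ξ̃_{r-1}` of the informal statement. -/
def merge (ξ : Plan G r) {Bk Bk' : Set V} (hBk : Bk ∈ ξ.blocks) (hBk' : Bk' ∈ ξ.blocks)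
    (hne : Bk ≠ Bk') (hc : (crossEdges G Bk Bk').Nonempty) : Plan G (r - 1) where
  blocks := (ξ.blocks \ {Bk, Bk'}) ∪ {Bk ∪ Bk'}
  ncard_blocks := by
    have hsub : {Bk, Bk'} ⊆ ξ.blocks := Set.pair_subset hBk hBk'
    have htwo : 2 ≤ r := ξ.ncard_blocks ▸ Set.ncard_pair hne ▸ Set.ncard_le_ncard hsub
    have hU : Bk ∪ Bk' ∉ ξ.blocks \ {Bk, Bk'} := fun h => ξ.union_notMem hBk hBk' hne h.1
    rw [Set.ncard_union_eq (Set.disjoint_singleton_right.mpr hU), Set.ncard_singleton,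
      Set.ncard_sdiff hsub, ξ.ncard_blocks, Set.ncard_pair hne]
    omega
  blocks_nonempty := by
    rintro B (hB | rfl)
    · exact ξ.blocks_nonempty B hB.1
    · exact (ξ.blocks_nonempty Bk hBk).mono Set.subset_union_left
  blocks_disjoint := by
    have hdisj : ∀ B ∈ ξ.blocks \ {Bk, Bk'}, Disjoint B (Bk ∪ Bk') := by
      rintro B ⟨hB, hB2⟩
      simp only [Set.mem_insert_iff, Set.mem_singleton_iff, not_or] at hB2
      exact Set.disjoint_union_right.mpr
        ⟨ξ.blocks_disjoint B hB Bk hBk hB2.1, ξ.blocks_disjoint B hB Bk' hBk' hB2.2⟩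
    rintro B (hB | rfl) B' (hB' | rfl) hBB'
    · exact ξ.blocks_disjoint B hB.1 B' hB'.1 hBB'
    · exact hdisj B hB
    · exact (hdisj B' hB').symm
    · exact absurd rfl hBB'
  blocks_cover v := by
    obtain ⟨B, hB, hvB⟩ := ξ.blocks_cover v
    by_cases hpair : B ∈ ({Bk, Bk'} : Set (Set V))
    · refine ⟨Bk ∪ Bk', Or.inr rfl, ?_⟩
      rcases hpair with rfl | rfl
      exacts [Or.inl hvB, Or.inr hvB]
    · exact ⟨B, Or.inl ⟨hB, hpair⟩, hvB⟩
  blocks_connected := by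
    rintro B (hB | rfl)
    · exact ξ.blocks_connected B hB.1
    · exact connected_ind_union (ξ.blocks_connected Bk hBk) (ξ.blocks_connected Bk' hBk') hc

variable (ξ : Plan G r) {Bk Bk' : Set V} (hBk : Bk ∈ ξ.blocks) (hBk' : Bk' ∈ ξ.blocks)
  (hne : Bk ≠ Bk') (hc : (crossEdges G Bk Bk').Nonempty)

omit [DecidableEq V] in
theorem sdiff_blocks_merge : ξ.blocks \ (ξ.merge hBk hBk' hne hc).blocks = {Bk, Bk'} := by
  have hU := ξ.union_notMem hBk hBk' hne
  ext B
  simp only [merge, Set.mem_sdiff, Set.mem_union, Set.mem_singleton_iff]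
  constructor
  · rintro ⟨hB, h⟩
    by_contra hpair
    exact h (Or.inl ⟨hB, hpair⟩)
  · intro hpair
    have hB : B ∈ ξ.blocks := Set.pair_subset hBk hBk' hpair
    refine ⟨hB, ?_⟩
    rintro (⟨-, h⟩ | rfl)
    exacts [h hpair, hU hB]

omit [DecidableEq V] in
theorem merge_sdiff_blocks : (ξ.merge hBk hBk' hne hc).blocks \ ξ.blocks = {Bk ∪ Bk'} := by
  have hU := ξ.union_notMem hBk hBk' hne
  ext B
  simp only [merge, Set.mem_sdiff, Set.mem_union, Set.mem_singleton_iff]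
  constructor
  · rintro ⟨⟨h, -⟩ | rfl, hB⟩
    exacts [absurd h hB, rfl]
  · rintro rfl
    exact ⟨Or.inr rfl, hU⟩

omit [DecidableEq V] in
theorem isAncestor_merge : IsAncestor G (ξ.merge hBk hBk' hne hc) ξ := by
  rw [IsAncestor, merge_sdiff_blocks, Set.ncard_singleton]

omit [DecidableEq V] in
theorem finprod_tau_rpow_merge (ρ : ℝ) :
    ∏ᶠ B ∈ (ξ.merge hBk hBk' hne hc).blocks, (tau G (ind G B) : ℝ) ^ ρ =
      (∏ᶠ B ∈ ξ.blocks, (tau G (ind G B) : ℝ) ^ ρ) *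
        ((tau G (ind G (Bk ∪ Bk')) : ℝ) / (tau G (ind G Bk) * tau G (ind G Bk'))) ^ ρ := by
  have hk := Nat.cast_pos (α := ℝ) |>.mpr (tau_pos (ξ.blocks_connected Bk hBk))
  have hk' := Nat.cast_pos (α := ℝ) |>.mpr (tau_pos (ξ.blocks_connected Bk' hBk'))
  have hU : Bk ∪ Bk' ∉ ξ.blocks \ {Bk, Bk'} := fun h => ξ.union_notMem hBk hBk' hne h.1
  have hsplit := Set.sdiff_union_of_subset (Set.pair_subset hBk hBk')
  conv_rhs => rw [← hsplit]
  rw [merge, finprod_mem_union (Set.disjoint_singleton_right.mpr hU) (Set.toFinite _)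
      (Set.toFinite _), finprod_mem_union Set.disjoint_sdiff_left (Set.toFinite _)
      (Set.toFinite _), finprod_mem_singleton, finprod_mem_pair hne,
    Real.div_rpow (by positivity) (by positivity), Real.mul_rpow hk.le hk'.le]
  field_simp

end Plan

section Ancestors

variable {G : SimpleGraph V} {r : ℕ}

omit [Fintype V] [DecidableEq V] in
theorem sUnion_sdiff_blocks {s : ℕ} (ξ : Plan G r) (ξ' : Plan G s) {Bold : Set V}
    (h : ξ'.blocks \ ξ.blocks = {Bold}) : ⋃₀ (ξ.blocks \ ξ'.blocks) = Bold := by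
  have hBold : Bold ∈ ξ'.blocks \ ξ.blocks := h ▸ rfl
  ext x
  constructor
  · rintro ⟨B, ⟨hB, hBξ'⟩, hxB⟩
    obtain ⟨B', hB', hxB'⟩ := ξ'.blocks_cover x
    by_contra hx
    have hB'ξ : B' ∈ ξ.blocks := by
      by_contra hB'ξ
      have hB'_eq : B' ∈ ({Bold} : Set (Set V)) := h ▸ ⟨hB', hB'ξ⟩
      exact hx (hB'_eq ▸ hxB')
    exact hBξ' (ξ.eq_of_mem_of_mem hB hB'ξ hxB hxB' ▸ hB')
  · intro hx
    obtain ⟨B, hB, hxB⟩ := ξ.blocks_cover x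
    refine ⟨B, ⟨hB, fun hBξ' => ?_⟩, hxB⟩
    exact hBold.2 (ξ'.eq_of_mem_of_mem hBξ' hBold.1 hxB hx ▸ hB)

variable {ξp : Plan G (r - 1)} {ξr : Plan G r}

omit [Fintype V] [DecidableEq V] in
theorem IsAncestor.blocks_eq (h : IsAncestor G ξp ξr) :
    ξp.blocks = (ξr.blocks \ (ξr.blocks \ ξp.blocks)) ∪ {⋃₀ (ξr.blocks \ ξp.blocks)} := by
  obtain ⟨Bold, hBold⟩ := Set.ncard_eq_one.mp h
  rw [sUnion_sdiff_blocks ξr ξp hBold, Set.sdiff_sdiff_right_self, Set.inter_comm, ← hBold,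
    Set.inter_union_sdiff]

omit [DecidableEq V] in
theorem IsAncestor.ncard_sdiff (h : IsAncestor G ξp ξr) :
    (ξr.blocks \ ξp.blocks).ncard = 2 := by
  have hr := Set.ncard_inter_add_ncard_sdiff_eq_ncard ξr.blocks ξp.blocks
  have hp := Set.ncard_inter_add_ncard_sdiff_eq_ncard ξp.blocks ξr.blocks
  rw [Set.inter_comm, h, ξp.ncard_blocks] at hp
  rw [ξr.ncard_blocks] at hr
  omega

omit [DecidableEq V] in
theorem IsAncestor.exists_eq_merge (h : IsAncestor G ξp ξr) :
    ∃ (Bk Bk' : Set V) (hBk : Bk ∈ ξr.blocks) (hBk' : Bk' ∈ ξr.blocks) (hne : Bk ≠ Bk')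
      (hc : (crossEdges G Bk Bk').Nonempty), ξp = ξr.merge hBk hBk' hne hc := by
  obtain ⟨Bk, Bk', hne, hN⟩ := Set.ncard_eq_two.mp h.ncard_sdiff
  have hBk : Bk ∈ ξr.blocks := (hN ▸ Or.inl rfl : Bk ∈ ξr.blocks \ ξp.blocks).1
  have hBk' : Bk' ∈ ξr.blocks := (hN ▸ Or.inr rfl : Bk' ∈ ξr.blocks \ ξp.blocks).1
  have hblocks : ξp.blocks = (ξr.blocks \ {Bk, Bk'}) ∪ {Bk ∪ Bk'} := by
    rw [h.blocks_eq, hN, Set.sUnion_pair]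
  have hc : (crossEdges G Bk Bk').Nonempty :=
    crossEdges_nonempty_of_connected (ξr.blocks_nonempty Bk hBk) (ξr.blocks_nonempty Bk' hBk')
      (ξr.blocks_disjoint Bk hBk Bk' hBk' hne)
      (ξp.blocks_connected _ (hblocks ▸ Or.inr rfl))
  exact ⟨Bk, Bk', hBk, hBk', hne, hc, Plan.blocks_injective hblocks⟩

/-- `AR(ξ)`, each pair of regions recorded as the set `{Bk, Bk'}` of their blocks. -/
def Plan.adjPairs (ξ : Plan G r) : Set (Set (Set V)) :=
  {P | ∃ Bk ∈ ξ.blocks, ∃ Bk' ∈ ξ.blocks,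
    Bk ≠ Bk' ∧ (crossEdges G Bk Bk').Nonempty ∧ P = {Bk, Bk'}}

omit [DecidableEq V] in
theorem bijOn_sdiff_blocks_ancestors (ξr : Plan G r) :
    Set.BijOn (fun ξp : Plan G (r - 1) => ξr.blocks \ ξp.blocks)
      {ξp | IsAncestor G ξp ξr} ξr.adjPairs := by
  refine ⟨?_, ?_, ?_⟩
  · intro ξp hξp
    obtain ⟨Bk, Bk', hBk, hBk', hne, hc, rfl⟩ := IsAncestor.exists_eq_merge hξp
    exact ⟨Bk, hBk, Bk', hBk', hne, hc, ξr.sdiff_blocks_merge hBk hBk' hne hc⟩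
  · intro ξ₁ h₁ ξ₂ h₂ heq
    apply Plan.blocks_injective
    rw [IsAncestor.blocks_eq h₁, IsAncestor.blocks_eq h₂]
    simp only at heq
    rw [heq]
  · rintro _ ⟨Bk, hBk, Bk', hBk', hne, hc, rfl⟩
    exact ⟨_, ξr.isAncestor_merge hBk hBk' hne hc, ξr.sdiff_blocks_merge hBk hBk' hne hc⟩

end Ancestors

theorem stmt_9_general (G : SimpleGraph V) (r : ℕ) (ξr : Plan G r)
    (W : Set (Set V) → ℝ) (hWr : 0 < W ξr.blocks)
    (ρ : ℝ) (K : ℝ) (hK : 0 < K) (Z : ℝ) (hZ : 0 < Z)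
    (φ : Set V → Set (Set V) → ℝ)
    (γ : Set (Set V) → ℝ)
    (hγ : ∀ P : Set (Set V), γ P = W P * ∏ᶠ B ∈ P, (tau G (ind G B) : ℝ) ^ ρ)
    (M : Plan G (r - 1) → ℝ)
    (hM : ∀ ξp : Plan G (r - 1), IsAncestor G ξp ξr →
      ∀ Bold ∈ ξp.blocks \ ξr.blocks,
        ∀ Bk ∈ ξr.blocks \ ξp.blocks, ∀ Bk' ∈ ξr.blocks \ ξp.blocks, Bk ≠ Bk' →
          M ξp = φ Bold ξp.blocks *
            ((tau G (ind G Bk) : ℝ) * (tau G (ind G Bk') : ℝ) *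
              ((crossEdges G Bk Bk').ncard : ℝ)) / (K * (tau G (ind G Bold) : ℝ)))
    (g : Set (Set V) → ℝ)
    (hg : ∀ Bk ∈ ξr.blocks, ∀ Bk' ∈ ξr.blocks, Bk ≠ Bk' →
      (crossEdges G Bk Bk').Nonempty →
      g {Bk, Bk'} =
        φ (Bk ∪ Bk') ((ξr.blocks \ {Bk, Bk'}) ∪ {Bk ∪ Bk'}) *
          (W ((ξr.blocks \ {Bk, Bk'}) ∪ {Bk ∪ Bk'}) / W ξr.blocks) *
          ((tau G (ind G (Bk ∪ Bk')) : ℝ) /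
              ((tau G (ind G Bk) : ℝ) * (tau G (ind G Bk') : ℝ))) ^ (ρ - 1) *
          ((crossEdges G Bk Bk').ncard : ℝ))
    (f : ℝ)
    (hf : f = ∑ᶠ ξp ∈ {ξp : Plan G (r - 1) | IsAncestor G ξp ξr},
      (γ ξp.blocks / Z) * M ξp)
    (S : ℝ)
    (hS : S = ∑ᶠ P ∈ {P : Set (Set V) | ∃ Bk ∈ ξr.blocks, ∃ Bk' ∈ ξr.blocks,
        Bk ≠ Bk' ∧ (crossEdges G Bk Bk').Nonempty ∧ P = {Bk, Bk'}}, g P)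
    (hSne : S ≠ 0) :
    γ ξr.blocks / (Z * f) = K * S⁻¹ := by
  have hterm : ∀ ξp ∈ {ξp : Plan G (r - 1) | IsAncestor G ξp ξr},
      γ ξp.blocks / Z * M ξp = γ ξr.blocks / (Z * K) * g (ξr.blocks \ ξp.blocks) := by
    intro ξp hξp
    obtain ⟨Bk, Bk', hBk, hBk', hne, hc, rfl⟩ := IsAncestor.exists_eq_merge hξp
    have hsdiff := ξr.sdiff_blocks_merge hBk hBk' hne hc
    have hk := Nat.cast_pos (α := ℝ) |>.mpr (tau_pos (ξr.blocks_connected Bk hBk))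
    have hk' := Nat.cast_pos (α := ℝ) |>.mpr (tau_pos (ξr.blocks_connected Bk' hBk'))
    have hU := Nat.cast_pos (α := ℝ) |>.mpr
      (tau_pos ((ξr.merge hBk hBk' hne hc).blocks_connected (Bk ∪ Bk') (Or.inr rfl)))
    rw [hM _ hξp (Bk ∪ Bk') (by rw [Plan.merge_sdiff_blocks]; rfl) Bk (hsdiff ▸ Or.inl rfl)
        Bk' (hsdiff ▸ Or.inr rfl) hne, hsdiff, hg Bk hBk Bk' hBk' hne hc, hγ, hγ,
      Plan.finprod_tau_rpow_merge, Real.rpow_sub_one (by positivity), Plan.merge]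
    field_simp
  have hfS : f = γ ξr.blocks / (Z * K) * S := by
    rw [hf, hS, finsum_mem_eq_of_bijOn (g := fun P => γ ξr.blocks / (Z * K) * g P) _
      (bijOn_sdiff_blocks_ancestors ξr) hterm, mul_finsum_mem]
    rfl
  have hγr : 0 < γ ξr.blocks := hγ ξr.blocks ▸ mul_pos hWr (ξr.finprod_tau_rpow_pos ρ)
  rw [hfS]
  field_simp

/-- With `f(ξr) = Σ_{ξp ∈ A₁(ξr)} (γ(ξp)/Z)·M(ξr|ξp)` and `S` the
unordered-adjacent-pair sum, if `S ≠ 0` then `γ(ξr)/(Z·f(ξr)) = K·S⁻¹`. -/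
theorem stmt_9 (G : SimpleGraph V) (r : ℕ) (hr : 1 < r) (ξr : Plan G r)
    (W : Set (Set V) → ℝ) (hW : ∀ P, 0 ≤ W P) (hWr : 0 < W ξr.blocks)
    (ρ : ℝ) (K : ℝ) (hK : 0 < K) (Z : ℝ) (hZ : 0 < Z)
    (φ : Set V → Set (Set V) → ℝ)
    (γ : Set (Set V) → ℝ)
    (hγ : ∀ P : Set (Set V), γ P = W P * ∏ᶠ B ∈ P, (tau G (ind G B) : ℝ) ^ ρ)
    (M : Plan G (r - 1) → ℝ)
    (hM : ∀ ξp : Plan G (r - 1), IsAncestor G ξp ξr →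
      ∀ Bold ∈ ξp.blocks \ ξr.blocks,
        ∀ Bk ∈ ξr.blocks \ ξp.blocks, ∀ Bk' ∈ ξr.blocks \ ξp.blocks, Bk ≠ Bk' →
          M ξp = φ Bold ξp.blocks *
            ((tau G (ind G Bk) : ℝ) * (tau G (ind G Bk') : ℝ) *
              ((crossEdges G Bk Bk').ncard : ℝ)) / (K * (tau G (ind G Bold) : ℝ)))
    (g : Set (Set V) → ℝ)
    (hg : ∀ Bk ∈ ξr.blocks, ∀ Bk' ∈ ξr.blocks, Bk ≠ Bk' →
      (crossEdges G Bk Bk').Nonempty →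
      g {Bk, Bk'} =
        φ (Bk ∪ Bk') ((ξr.blocks \ {Bk, Bk'}) ∪ {Bk ∪ Bk'}) *
          (W ((ξr.blocks \ {Bk, Bk'}) ∪ {Bk ∪ Bk'}) / W ξr.blocks) *
          ((tau G (ind G (Bk ∪ Bk')) : ℝ) /
              ((tau G (ind G Bk) : ℝ) * (tau G (ind G Bk') : ℝ))) ^ (ρ - 1) *
          ((crossEdges G Bk Bk').ncard : ℝ))
    (f : ℝ)
    (hf : f = ∑ᶠ ξp ∈ {ξp : Plan G (r - 1) | IsAncestor G ξp ξr},
      (γ ξp.blocks / Z) * M ξp)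
    (S : ℝ)
    (hS : S = ∑ᶠ P ∈ {P : Set (Set V) | ∃ Bk ∈ ξr.blocks, ∃ Bk' ∈ ξr.blocks,
        Bk ≠ Bk' ∧ (crossEdges G Bk Bk').Nonempty ∧ P = {Bk, Bk'}}, g P)
    (hSne : S ≠ 0) :
    γ ξr.blocks / (Z * f) = K * S⁻¹ :=
  stmt_9_general G r ξr W hWr ρ K hK Z hZ φ γ hγ M hM g hg f hf S hS hSne

end Redist
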